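/- Let φ₀ ∈ X², i.e., φ₀ has Fourier transform in L²(ℝ, |k|⁴ dk), and also φ₀' ∈ L²(ℝ). Then the function t ↦ (e^{itΔ}φ₀)'(0) (the spatial derivative at x = 0 of the free Schrödinger evolution of φ₀) belongs to X^{3/4}: its time-Fourier transform ω ↦ (i/(2√|ω|)) Θ(-ω) ( φ₀'^(√{-ω}) + φ₀'^(-√{-ω}) ) lies in L²(ℝ, |ω|^{3/2} dω), with ‖|ω|^{3/4} F((e^{i·Δ}φ₀)'(0))‖_{L²} ≤ C ‖|k|² φ̂₀‖_{L²}. -/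

import Mathlib

open MeasureTheory Complex

/-- The Heaviside function. -/
noncomputable def heaviside (t : ℝ) : ℝ := if 0 < t then 1 else 0

/-- Let `φ₀ ∈ X²` (Fourier transform `Fφ0 ∈ L²(k⁴dk)`) with `φ₀' ∈ L²`.  Then the
time-Fourier transform `ω ↦ (i/(2√|ω|)) Θ(-ω) (Fφ₀'(√(-ω)) + Fφ₀'(-√(-ω)))` of
`t ↦ (e^{itΔ}φ₀)'(0)` lies in `L²(|ω|^{3/2}dω)`, i.e. `(e^{i·Δ}φ₀)'(0) ∈ X^{3/4}`,
with `‖|ω|^{3/4} F((e^{i·Δ}φ₀)'(0))‖_{L²} ≤ C ‖|k|² φ̂₀‖_{L²}`. -/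
theorem free_evolution_deriv_at_zero_X34 :
    ∃ C : ℝ, 0 < C ∧ ∀ (Fφ0 : ℝ → ℂ), Measurable Fφ0 →
      Integrable (fun k : ℝ => |k| ^ (4 : ℝ) * ‖Fφ0 k‖ ^ 2) →
      Integrable (fun k : ℝ => ‖Complex.I * k * Fφ0 k‖ ^ 2) →
      ∀ G : ℝ → ℂ,
        (∀ ω : ℝ, G ω = Complex.I / (2 * (Real.sqrt |ω| : ℂ)) * (heaviside (-ω) : ℝ) *
          (Complex.I * (Real.sqrt (-ω) : ℝ) * Fφ0 (Real.sqrt (-ω)) +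
            Complex.I * (-(Real.sqrt (-ω) : ℝ) : ℝ) * Fφ0 (-(Real.sqrt (-ω))))) →
        Integrable (fun ω : ℝ => |ω| ^ ((3 : ℝ) / 2) * ‖G ω‖ ^ 2) ∧
          Real.sqrt (∫ ω : ℝ, |ω| ^ ((3 : ℝ) / 2) * ‖G ω‖ ^ 2) ≤
            C * Real.sqrt (∫ k : ℝ, |k| ^ (4 : ℝ) * ‖Fφ0 k‖ ^ 2) := by
  refine ⟨2, by norm_num, ?_⟩
  intro Fφ0 hmeas hInt4 _hInt1 G hG
  set g4 : ℝ → ℝ := fun k => |k| ^ (4 : ℝ) * ‖Fφ0 k‖ ^ 2 with hg4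
  set f : ℝ → ℝ := fun ω => |ω| ^ ((3 : ℝ) / 2) * ‖G ω‖ ^ 2 with hf
  -- measurability
  have hheav : Measurable heaviside := by
    have : heaviside = Set.indicator (Set.Ioi 0) (fun _ => (1 : ℝ)) := by
      funext t; simp [heaviside, Set.indicator]
    rw [this]; exact measurable_const.indicator measurableSet_Ioi
  have hGmeas : Measurable G := by
    have hGfun : G = fun ω => Complex.I / (2 * (Real.sqrt |ω| : ℂ)) * (heaviside (-ω) : ℝ) *
          (Complex.I * (Real.sqrt (-ω) : ℝ) * Fφ0 (Real.sqrt (-ω)) +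
            Complex.I * (-(Real.sqrt (-ω) : ℝ) : ℝ) * Fφ0 (-(Real.sqrt (-ω)))) := funext hG
    rw [hGfun]
    have m1 : Measurable fun ω : ℝ => Real.sqrt (-ω) :=
      Real.continuous_sqrt.measurable.comp measurable_neg
    have m2 : Measurable fun ω : ℝ => Real.sqrt |ω| :=
      Real.continuous_sqrt.measurable.comp measurable_abs
    have mh : Measurable fun ω : ℝ => heaviside (-ω) := hheav.comp measurable_neg
    fun_prop
  have hfmeas : Measurable f := by
    apply Measurable.mul
    · exact (Real.continuous_rpow_const (by norm_num)).measurable.comp measurable_abs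
    · exact hGmeas.norm.pow_const 2
  have hg4meas : Measurable g4 := by
    apply Measurable.mul
    · exact (Real.continuous_rpow_const (by norm_num)).measurable.comp measurable_abs
    · exact (hmeas.norm.pow_const 2)
  -- value of G at -s^2, s > 0
  have hGs : ∀ s : ℝ, 0 < s → G (-s ^ 2) = -(1 / 2 : ℂ) * (Fφ0 s - Fφ0 (-s)) := by
    intro s hs
    have h2 : Real.sqrt (s ^ 2) = s := Real.sqrt_sq hs.le
    have h3 : |(-s ^ 2)| = s ^ 2 := by rw [abs_neg, _root_.abs_of_nonneg (sq_nonneg s)]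
    have h4 : heaviside (s ^ 2) = 1 := if_pos (by positivity)
    rw [hG, neg_neg, h3, h2, h4]
    have hs0 : (s : ℂ) ≠ 0 := Complex.ofReal_ne_zero.2 hs.ne'
    push_cast
    field_simp
    ring_nf
    rw [Complex.I_sq]
    ring
  -- G vanishes for ω ≥ 0
  have hG0 : ∀ ω : ℝ, 0 ≤ ω → G ω = 0 := by
    intro ω hω
    have : heaviside (-ω) = 0 := if_neg (by simpa using hω)
    rw [hG, this]
    simp
  -- f is the indicator of Iio 0
  have hind : f = (Set.Iio (0 : ℝ)).indicator f := by
    funext ω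
    by_cases h : ω < 0
    · rw [Set.indicator_of_mem (Set.mem_Iio.2 h)]
    · rw [Set.indicator_of_notMem (by simpa using h), hf]
      simp [hG0 ω (not_lt.1 h)]
  -- change of variables setup
  have himg : (fun s : ℝ => -s ^ 2) '' Set.Ioi 0 = Set.Iio 0 := by
    ext ω
    constructor
    · rintro ⟨s, hs, rfl⟩
      have : (0 : ℝ) < s := hs
      simp only [Set.mem_Iio]
      nlinarith
    · intro hω
      have hω' : (0 : ℝ) < -ω := by simpa using hω
      refine ⟨Real.sqrt (-ω), Real.sqrt_pos.2 hω', ?_⟩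
      show -(Real.sqrt (-ω)) ^ 2 = ω
      rw [Real.sq_sqrt hω'.le, neg_neg]
  have hderiv : ∀ x ∈ Set.Ioi (0 : ℝ),
      HasDerivWithinAt (fun s : ℝ => -s ^ 2) (-(2 * x)) (Set.Ioi 0) x := by
    intro x _
    have : HasDerivWithinAt (fun s : ℝ => -s ^ 2) (-(((2 : ℕ) : ℝ) * x ^ (2 - 1))) (Set.Ioi 0) x :=
      ((hasDerivAt_pow 2 x).neg).hasDerivWithinAt (s := Set.Ioi 0)
    simpa using this
  have hinj : Set.InjOn (fun s : ℝ => -s ^ 2) (Set.Ioi 0) := by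
    intro a ha b hb h
    have ha' : (0 : ℝ) < a := ha
    have hb' : (0 : ℝ) < b := hb
    have h2 : a ^ 2 = b ^ 2 := by dsimp at h; linarith [neg_inj.1 h]
    calc a = Real.sqrt (a ^ 2) := (Real.sqrt_sq ha'.le).symm
      _ = Real.sqrt (b ^ 2) := by rw [h2]
      _ = b := Real.sqrt_sq hb'.le
  -- transported function and its bound
  set F : ℝ → ℝ := fun s => |(-(2 * s))| • f (-s ^ 2) with hF
  set h : ℝ → ℝ := fun s => g4 s + g4 (-s) with hh
  have hFbound : ∀ s ∈ Set.Ioi (0 : ℝ), F s ≤ h s := by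
    intro s hs
    have hs' : (0 : ℝ) < s := hs
    have hG2 : ‖G (-s ^ 2)‖ ^ 2 ≤ (‖Fφ0 s‖ ^ 2 + ‖Fφ0 (-s)‖ ^ 2) / 2 := by
      rw [hGs s hs']
      have h1 : ‖-(1 / 2 : ℂ) * (Fφ0 s - Fφ0 (-s))‖ = (1 / 2) * ‖Fφ0 s - Fφ0 (-s)‖ := by
        rw [norm_mul]; norm_num
      rw [h1]
      have h2 : ‖Fφ0 s - Fφ0 (-s)‖ ≤ ‖Fφ0 s‖ + ‖Fφ0 (-s)‖ := norm_sub_le _ _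
      nlinarith [norm_nonneg (Fφ0 s - Fφ0 (-s)), norm_nonneg (Fφ0 s), norm_nonneg (Fφ0 (-s)),
        sq_nonneg (‖Fφ0 s‖ - ‖Fφ0 (-s)‖)]
    have habs : |(-s ^ 2)| = s ^ 2 := by rw [abs_neg, _root_.abs_of_nonneg (sq_nonneg s)]
    have hrpow : (s ^ 2 : ℝ) ^ ((3 : ℝ) / 2) = s ^ 3 := by
      rw [← Real.rpow_natCast s 2, ← Real.rpow_mul hs'.le, ← Real.rpow_natCast s 3]
      norm_num
    have hrpow4 : |s| ^ (4 : ℝ) = s ^ 4 := by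
      rw [_root_.abs_of_pos hs', ← Real.rpow_natCast s 4]; norm_num
    have hrpow4' : |(-s)| ^ (4 : ℝ) = s ^ 4 := by rw [abs_neg]; exact hrpow4
    have hFs : F s = 2 * s * (s ^ 3 * ‖G (-s ^ 2)‖ ^ 2) := by
      rw [hF]
      simp only [smul_eq_mul, hf]
      rw [habs, hrpow, abs_neg, _root_.abs_of_pos (by linarith : (0:ℝ) < 2 * s)]
    rw [hFs, hh, hg4]
    simp only [hrpow4, hrpow4']
    nlinarith [hG2, norm_nonneg (G (-s ^ 2)), sq_nonneg s, pow_pos hs' 4]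
  have hFnonneg : ∀ s : ℝ, 0 ≤ F s := by
    intro s
    apply smul_nonneg (abs_nonneg _)
    apply mul_nonneg (Real.rpow_nonneg (abs_nonneg _) _) (sq_nonneg _)
  -- integrability of h on Ioi 0
  have hg4neg : Integrable (fun k : ℝ => g4 (-k)) := by
    have hemb : MeasurableEmbedding (fun x : ℝ => -x) :=
      (Homeomorph.neg ℝ).measurableEmbedding
    exact ((Measure.measurePreserving_neg (volume : Measure ℝ)).integrable_comp_emb hemb).2 hInt4
  have hhInt : IntegrableOn h (Set.Ioi 0) :=
    (hInt4.add hg4neg).integrableOn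
  have hhnonneg : ∀ s : ℝ, 0 ≤ h s := by
    intro s
    apply add_nonneg <;>
      exact mul_nonneg (Real.rpow_nonneg (abs_nonneg _) _) (sq_nonneg _)
  -- integrability of F on Ioi 0
  have hFmeas : Measurable F := by
    apply Measurable.fun_smul
    · exact (measurable_const.mul measurable_id).neg.abs
    · exact hfmeas.comp (measurable_id.pow_const 2).neg
  have hFInt : IntegrableOn F (Set.Ioi 0) := by
    apply Integrable.mono' hhInt (hFmeas.aestronglyMeasurable.restrict)
    filter_upwards [ae_restrict_mem measurableSet_Ioi] with s hs
    rw [Real.norm_of_nonneg (hFnonneg s)]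
    exact hFbound s hs
  -- integrability of f
  have hfInt : IntegrableOn f (Set.Iio 0) := by
    rw [← himg]
    exact (integrableOn_image_iff_integrableOn_abs_deriv_smul measurableSet_Ioi hderiv hinj f).2
      hFInt
  have hfIntall : Integrable f := by
    rw [hind]
    exact (integrable_indicator_iff measurableSet_Iio).2 hfInt
  refine ⟨hfIntall, ?_⟩
  -- bound the integral
  set A : ℝ := ∫ k : ℝ, g4 k with hA
  have hAnonneg : 0 ≤ A := integral_nonneg fun k =>
    mul_nonneg (Real.rpow_nonneg (abs_nonneg _) _) (sq_nonneg _)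
  have hIoi1 : ∫ s in Set.Ioi (0 : ℝ), g4 s ≤ A :=
    setIntegral_le_integral hInt4 (ae_of_all _ fun k =>
      mul_nonneg (Real.rpow_nonneg (abs_nonneg _) _) (sq_nonneg _))
  have hIoi2 : ∫ s in Set.Ioi (0 : ℝ), g4 (-s) ≤ A := by
    rw [integral_comp_neg_Ioi]
    refine le_trans ?_ (le_of_eq rfl)
    calc ∫ s in Set.Iic (-(0:ℝ)), g4 s = ∫ s in Set.Iic (0:ℝ), g4 s := by norm_num
      _ ≤ A := setIntegral_le_integral hInt4 (ae_of_all _ fun k =>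
          mul_nonneg (Real.rpow_nonneg (abs_nonneg _) _) (sq_nonneg _))
  have hintf : ∫ ω : ℝ, f ω ≤ 2 * A := by
    have e1 : ∫ ω : ℝ, f ω = ∫ ω in Set.Iio (0 : ℝ), f ω := by
      conv_lhs => rw [hind]
      exact integral_indicator measurableSet_Iio
    have e2 : ∫ ω in Set.Iio (0 : ℝ), f ω = ∫ s in Set.Ioi (0 : ℝ), F s := by
      rw [← himg]
      exact integral_image_eq_integral_abs_deriv_smul measurableSet_Ioi hderiv hinj f
    have e3 : ∫ s in Set.Ioi (0 : ℝ), F s ≤ ∫ s in Set.Ioi (0 : ℝ), h s := by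
      apply setIntegral_mono_on hFInt hhInt measurableSet_Ioi
      exact hFbound
    have e4 : ∫ s in Set.Ioi (0 : ℝ), h s
        = (∫ s in Set.Ioi (0 : ℝ), g4 s) + ∫ s in Set.Ioi (0 : ℝ), g4 (-s) := by
      rw [hh]
      exact integral_add hInt4.integrableOn hg4neg.integrableOn
    rw [e1, e2]
    calc (∫ s in Set.Ioi (0 : ℝ), F s) ≤ ∫ s in Set.Ioi (0 : ℝ), h s := e3
      _ = _ := e4
      _ ≤ A + A := add_le_add hIoi1 hIoi2
      _ = 2 * A := by ring
  calc Real.sqrt (∫ ω : ℝ, f ω) ≤ Real.sqrt (2 * A) := Real.sqrt_le_sqrt hintf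
    _ ≤ Real.sqrt (4 * A) := Real.sqrt_le_sqrt (by linarith)
    _ = 2 * Real.sqrt A := by
        rw [show (4 : ℝ) * A = 2 ^ 2 * A by ring, Real.sqrt_mul (by positivity) A,
          Real.sqrt_sq (by norm_num)]
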